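/- Let f(r) = L_{n−1}^{(2ν)}(2aβr)² with n ≥ 1. Then f satisfies the second-order linear ODE in r: −r²·f''(r) + 2n²·L_n^{(2ν)}(2aβr)² + (6aβr² − 2nr − 6νr − r)·f'(r) + (−8a²β²r² + 4aβnr + 16aβνr + 4aβr − 8ν² − 2n² − 8νn)·f(r) = 0, i.e. the operator −r²D_r² + 2n²S_n + (6aβr² − 2nr − 6νr − r)D_r + (−8a²β²r² + 4aβ(n + 4ν + 1)r − 8ν² − 2n² − 8νn) annihilates the sequence of functions g_n(r) = L_{n−1}^{(2ν)}(2aβr)². -/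

import Mathlib

noncomputable def laguerreL (n : ℕ) (a x : ℝ) : ℝ :=
  ∑ k ∈ Finset.range (n + 1), (-1 : ℝ) ^ k *
    ((∏ i ∈ Finset.range (n - k), ((n : ℝ) + a - i)) / (Nat.factorial (n - k))) *
    x ^ k / (Nat.factorial k)

/-!
Write `L_m` for the Laguerre polynomial with parameter `α`, whose `k`-th coefficient is
`(-1)^k binom(m + α, m - k) / k!`. Comparing coefficients, using only Pascal's rule and the
absorption identity `(j + 1) binom(t, j + 1) = (t - j) binom(t, j)`, gives Laguerre's equation
`x L_m'' + (α + 1 - x) L_m' + m L_m = 0` and the recurrence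
`(m + 1) L_{m+1} = (m + 1 + α - x) L_m + x L_m'`.
With `α = 2ν`, `m = n - 1` and `x = 2aβr` the chain rule turns the left-hand side of the
theorem into a polynomial in `L_m(x)`, `L_m'(x)`, `L_m''(x)` and `L_{m+1}(x)`, which is `-2x L_m`
times Laguerre's equation plus `2((m + 1) L_{m+1} + (m + 1 + α - x) L_m + x L_m')` times the recurrence.
-/

open Polynomial Finset

section

variable {K : Type*} [Field K] [CharZero K]

theorem Ring.choose_eq_prod_range_div_factorial (t : K) (j : ℕ) :
    Ring.choose t j = (∏ i ∈ range j, (t - i)) / j.factorial := by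
  rw [Ring.choose_eq_smul, ← aeval_eq_smeval, aeval_def, eval₂_eq_eval_map, descPochhammer_map,
    descPochhammer_eval_eq_prod_range, smul_eq_mul, div_eq_inv_mul]

theorem Ring.succ_mul_choose_succ (t : K) (j : ℕ) :
    (j + 1) * Ring.choose t (j + 1) = (t - j) * Ring.choose t j := by
  simp only [Ring.choose_eq_prod_range_div_factorial, prod_range_succ, Nat.factorial_succ]
  push_cast
  field_simp

theorem Polynomial.coeff_X_mul_derivative {R : Type*} [Semiring R] (p : R[X]) (k : ℕ) :
    (X * derivative p).coeff k = k * p.coeff k := by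
  cases k with
  | zero => simp
  | succ k => rw [coeff_X_mul, coeff_derivative, ← Nat.cast_succ, Nat.cast_comm]

noncomputable def laguerreCoeff (α : K) (m k : ℕ) : K :=
  if k ≤ m then (-1) ^ k * Ring.choose (m + α) (m - k) / k.factorial else 0

noncomputable def laguerrePoly (α : K) (m : ℕ) : K[X] :=
  ∑ k ∈ range (m + 1), C (laguerreCoeff α m k) * X ^ k

theorem coeff_laguerrePoly (α : K) (m k : ℕ) :
    (laguerrePoly α m).coeff k = laguerreCoeff α m k := by
  simp only [laguerrePoly, finsetSum_coeff, coeff_C_mul_X_pow, sum_ite_eq, mem_range]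
  unfold laguerreCoeff
  split_ifs <;> first | rfl | omega

theorem eval_laguerrePoly (α x : ℝ) (m : ℕ) : (laguerrePoly α m).eval x = laguerreL m α x := by
  simp only [laguerrePoly, eval_finsetSum, eval_mul, eval_C, eval_pow, eval_X, laguerreL]
  refine sum_congr rfl fun k hk => ?_
  rw [laguerreCoeff, if_pos (Nat.lt_succ_iff.mp (mem_range.mp hk)),
    Ring.choose_eq_prod_range_div_factorial]
  ring

theorem laguerreCoeff_succ_right (α : K) (m k : ℕ) :
    (k + 1) * (k + 1 + α) * laguerreCoeff α m (k + 1) = (k - m) * laguerreCoeff α m k := by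
  unfold laguerreCoeff
  rcases lt_trichotomy k m with h | rfl | h
  · obtain ⟨j, rfl⟩ := Nat.exists_eq_add_of_lt h
    rw [if_pos (by omega), if_pos (by omega), show k + j + 1 - (k + 1) = j by omega,
      show k + j + 1 - k = j + 1 by omega]
    have absorb := Ring.succ_mul_choose_succ ((k + j + 1 : ℕ) + α) j
    have hk : (k.factorial : K) ≠ 0 := Nat.cast_ne_zero.mpr k.factorial_ne_zero
    rw [Nat.factorial_succ]
    push_cast at absorb ⊢
    field_simp
    linear_combination (-1 : K) ^ k * absorb
  · simp
  · rw [if_neg (by omega), if_neg (by omega)]; ring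

theorem laguerreCoeff_succ_zero (α : K) (m : ℕ) :
    (m + 1) * laguerreCoeff α (m + 1) 0 = (m + 1 + α) * laguerreCoeff α m 0 := by
  have pascal := Ring.choose_succ_succ ((m : K) + α) m
  have absorb := Ring.succ_mul_choose_succ ((m : K) + α) m
  simp only [laguerreCoeff, zero_le, if_true, pow_zero, one_mul, Nat.factorial_zero,
    Nat.cast_one, div_one, Nat.sub_zero]
  push_cast
  rw [show (m : K) + 1 + α = m + α + 1 by ring, pascal]
  linear_combination absorb

theorem laguerreCoeff_succ_succ (α : K) (m j : ℕ) :
    (m + 1) * laguerreCoeff α (m + 1) (j + 1) + laguerreCoeff α m j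
      = (m + j + 2 + α) * laguerreCoeff α m (j + 1) := by
  have hj : (j.factorial : K) ≠ 0 := Nat.cast_ne_zero.mpr j.factorial_ne_zero
  unfold laguerreCoeff
  rcases lt_trichotomy j m with h | rfl | h
  · obtain ⟨i, rfl⟩ := Nat.exists_eq_add_of_lt h
    rw [if_pos (by omega), if_pos (by omega), if_pos (by omega),
      show j + i + 1 + 1 - (j + 1) = i + 1 by omega, show j + i + 1 - j = i + 1 by omega,
      show j + i + 1 - (j + 1) = i by omega]
    have pascal := Ring.choose_succ_succ (((j + i + 1 : ℕ) : K) + α) i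
    have absorb := Ring.succ_mul_choose_succ (((j + i + 1 : ℕ) : K) + α) i
    rw [Nat.factorial_succ]
    push_cast at pascal absorb ⊢
    rw [show (j : K) + i + 1 + 1 + α = j + i + 1 + α + 1 by ring, pascal]
    field_simp
    linear_combination -(-1 : K) ^ j * absorb
  · rw [if_pos le_rfl, if_pos le_rfl, if_neg (by omega), Nat.sub_self, Nat.sub_self,
      Nat.factorial_succ]
    simp only [Ring.choose_zero_right]
    push_cast
    field_simp
    ring
  · rw [if_neg (by omega), if_neg (by omega), if_neg (by omega)]
    ring

theorem laguerrePoly_ode (α : K) (m : ℕ) :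
    X * derivative (derivative (laguerrePoly α m)) + (C (α + 1) - X) * derivative (laguerrePoly α m)
      + C (m : K) * laguerrePoly α m = 0 := by
  ext k
  rw [sub_mul]
  simp only [coeff_add, coeff_sub, coeff_C_mul, coeff_X_mul_derivative, coeff_derivative,
    coeff_laguerrePoly, coeff_zero]
  linear_combination laguerreCoeff_succ_right α m k

theorem laguerrePoly_succ (α : K) (m : ℕ) :
    C ((m : K) + 1) * laguerrePoly α (m + 1)
      = (C ((m : K) + 1 + α) - X) * laguerrePoly α m + X * derivative (laguerrePoly α m) := by
  ext k
  rw [sub_mul]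
  cases k with
  | zero =>
    simp only [coeff_add, coeff_sub, coeff_C_mul, coeff_X_mul_zero, coeff_laguerrePoly]
    linear_combination laguerreCoeff_succ_zero α m
  | succ j =>
    simp only [coeff_add, coeff_sub, coeff_C_mul, coeff_X_mul, coeff_derivative,
      coeff_laguerrePoly]
    linear_combination laguerreCoeff_succ_succ α m j

end

theorem laguerre_sq_ode (a β ν : ℝ) (n : ℕ) (hn : 1 ≤ n) (r : ℝ) :
    -r ^ 2 * deriv (deriv (fun s => laguerreL (n - 1) (2 * ν) (2 * a * β * s) ^ 2)) r +
      2 * (n : ℝ) ^ 2 * laguerreL n (2 * ν) (2 * a * β * r) ^ 2 +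
      (6 * a * β * r ^ 2 - 2 * (n : ℝ) * r - 6 * ν * r - r) *
        deriv (fun s => laguerreL (n - 1) (2 * ν) (2 * a * β * s) ^ 2) r +
      (-8 * a ^ 2 * β ^ 2 * r ^ 2 + 4 * a * β * ((n : ℝ) + 4 * ν + 1) * r
        - 8 * ν ^ 2 - 2 * (n : ℝ) ^ 2 - 8 * ν * (n : ℝ)) *
        laguerreL (n - 1) (2 * ν) (2 * a * β * r) ^ 2 = 0 := by
  obtain ⟨m, rfl⟩ : ∃ m, n = m + 1 := ⟨n - 1, by omega⟩
  have deriv_eval (p : ℝ[X]) : deriv (fun s => p.eval s) = fun s => p.derivative.eval s :=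
    funext fun s => p.deriv
  have as_poly : (fun s => laguerreL m (2 * ν) (2 * a * β * s) ^ 2)
      = fun s => (((laguerrePoly (2 * ν) m).comp (C (2 * a * β) * X)) ^ 2).eval s := by
    funext s
    simp [eval_laguerrePoly]
  have ode := congrArg (eval (2 * a * β * r)) (laguerrePoly_ode (2 * ν) m)
  have succ := congrArg (eval (2 * a * β * r)) (laguerrePoly_succ (2 * ν) m)
  simp only [eval_add, eval_sub, eval_mul, eval_C, eval_X, eval_zero, eval_laguerrePoly] at ode succ
  rw [Nat.add_sub_cancel, as_poly, deriv_eval, deriv_eval]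
  simp only [derivative_sq, derivative_mul, derivative_comp, derivative_C, derivative_X, eval_add,
    eval_mul, eval_C, eval_X, eval_comp, eval_laguerrePoly, zero_mul, zero_add, mul_one]
  push_cast
  linear_combination (-2 * (2 * a * β * r) * laguerreL m (2 * ν) (2 * a * β * r)) * ode
    + 2 * ((m + 1) * laguerreL (m + 1) (2 * ν) (2 * a * β * r)
      + (m + 1 + 2 * ν - 2 * a * β * r) * laguerreL m (2 * ν) (2 * a * β * r)
      + 2 * a * β * r * (derivative (laguerrePoly (2 * ν) m)).eval (2 * a * β * r)) * succ
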